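/- Let X_1,…,X_n be independent Bernoulli random variables with parameter p ∈ (0,1], let S_n = Σ_{i=1}^n X_i, p̂ = S_n/n, and Z = 1{S_n > 0}/p̂ − 1/p (with 1{S_n>0}/p̂ = 0 when S_n = 0). Then for every n ≥ 1 and every p, E[Z] ≤ 4/p. -/

import Mathlib

/-!
Grouping outcomes by `S_n = k` turns the expectation into a binomial sum. For `k ≥ 1`,
`n / k ≤ 2 (n + 1) / (k + 1)`, and `(n + 1) / (k + 1) · C(n, k) = C(n + 1, k + 1)`, so
`E[1{S_n > 0} n / S_n] ≤ (2 / p) ∑ₖ C(n + 1, k + 1) p^(k+1) (1 - p)^(n-k) = (2 / p) (1 - (1 - p)^(n+1))`,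
which is at most `2 / p`. Hence `E[Z] ≤ 1 / p`.
-/

open MeasureTheory ENNReal

noncomputable section

namespace BernoulliInvMoment

/-- The Bernoulli(p) distribution on `Bool`: `true` with probability `p`,
`false` with probability `1 − p`. -/
def bern (p : ℝ) : Measure Bool :=
  (Real.toNNReal p) • Measure.dirac true + (Real.toNNReal (1 - p)) • Measure.dirac false

instance bern_finite (p : ℝ) : IsFiniteMeasure (bern p) := by
  unfold bern; infer_instance

/-- The distribution of `n` independent Bernoulli(p) random variables. -/
def bernData (n : ℕ) (p : ℝ) : Measure (Fin n → Bool) :=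
  Measure.pi fun _ => bern p

/-- `S_n`: the number of successes. -/
def bcount (n : ℕ) (d : Fin n → Bool) : ℕ :=
  (Finset.univ.filter fun i => d i = true).card

open Finset

theorem bern_real_singleton {p : ℝ} (hp : 0 ≤ p) (hp1 : p ≤ 1) (b : Bool) :
    (bern p).real {b} = if b then p else 1 - p := by
  cases b <;> simp [bern, Measure.real, hp, hp1]

theorem isProbabilityMeasure_bern {p : ℝ} (hp : 0 ≤ p) (hp1 : p ≤ 1) :
    IsProbabilityMeasure (bern p) := by
  constructor
  simp [bern, ← ENNReal.coe_add, ← Real.toNNReal_add hp (sub_nonneg.2 hp1)]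

theorem isProbabilityMeasure_bernData (n : ℕ) {p : ℝ} (hp : 0 ≤ p) (hp1 : p ≤ 1) :
    IsProbabilityMeasure (bernData n p) :=
  have := isProbabilityMeasure_bern hp hp1
  inferInstanceAs (IsProbabilityMeasure (Measure.pi _))

theorem bernData_real_singleton {n : ℕ} {p : ℝ} (hp : 0 ≤ p) (hp1 : p ≤ 1) (d : Fin n → Bool) :
    (bernData n p).real {d} = p ^ bcount n d * (1 - p) ^ (n - bcount n d) := by
  have hcard : #{i | d i ≠ true} = n - bcount n d := by
    rw [bcount, filter_not, card_sdiff_of_subset (filter_subset _ _), card_univ, Fintype.card_fin]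
  rw [bernData, ← Set.univ_pi_singleton d, measureReal_def, Measure.pi_pi, ENNReal.toReal_prod,
    ← prod_filter_mul_prod_filter_not univ fun i => d i = true]
  simp_rw [← measureReal_def, bern_real_singleton hp hp1]
  rw [prod_congr rfl fun i hi => if_pos (mem_filter.1 hi).2,
    prod_congr rfl fun i hi => if_neg (mem_filter.1 hi).2, prod_const, prod_const, hcard, bcount]

theorem card_filter_bcount_eq (n k : ℕ) :
    #{d : Fin n → Bool | bcount n d = k} = n.choose k := by
  rw [show n.choose k = #(powersetCard k (univ : Finset (Fin n))) by simp]
  refine card_nbij' (fun d => ({i | d i = true} : Finset (Fin n))) (fun s i => decide (i ∈ s))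
    (fun d hd => ?_) (fun s hs => ?_) (fun d _ => by simp) (fun s _ => by simp)
  · rw [mem_coe, mem_filter] at hd
    simpa [bcount] using hd.2
  · rw [mem_coe, mem_powersetCard] at hs
    rw [mem_coe, mem_filter]
    simpa [bcount] using hs.2

theorem integral_bernData_comp_bcount {n : ℕ} {p : ℝ} (hp : 0 ≤ p) (hp1 : p ≤ 1) (f : ℕ → ℝ) :
    ∫ d, f (bcount n d) ∂bernData n p =
      ∑ k ∈ range (n + 1), p ^ k * (1 - p) ^ (n - k) * n.choose k * f k := by
  have hmaps : ∀ d ∈ (univ : Finset (Fin n → Bool)), bcount n d ∈ range (n + 1) := fun d _ =>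
    mem_range_succ_iff.2 <| (card_filter_le _ _).trans_eq (card_fin n)
  have := isProbabilityMeasure_bernData n hp hp1
  rw [integral_fintype .of_finite, ← sum_fiberwise_of_maps_to hmaps]
  refine sum_congr rfl fun k _ => ?_
  rw [sum_congr rfl fun d hd => by rw [bernData_real_singleton hp hp1, (mem_filter.1 hd).2],
    sum_const, card_filter_bcount_eq, nsmul_eq_mul, smul_eq_mul]
  ring

theorem mul_sum_pow_mul_choose_mul_succ_div_succ (p q : ℝ) (n : ℕ) :
    p * ∑ k ∈ range (n + 1), p ^ k * q ^ (n - k) * n.choose k * ((n + 1) / (k + 1)) =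
      (p + q) ^ (n + 1) - q ^ (n + 1) := by
  rw [add_pow, sum_range_succ' _ (n + 1), mul_sum]
  simp only [pow_zero, one_mul, Nat.sub_zero, Nat.choose_zero_right, Nat.cast_one, mul_one,
    add_sub_cancel_right, Nat.add_sub_add_right]
  refine sum_congr rfl fun k _ => ?_
  have h := congrArg (Nat.cast : ℕ → ℝ) (Nat.add_one_mul_choose_eq n k)
  push_cast at h
  field_simp
  linear_combination (p ^ (k + 1) * q ^ (n - k)) * h

theorem div_le_two_mul_succ_div_succ (n k : ℕ) :
    (if 0 < k then (n : ℝ) / k else 0) ≤ 2 * ((n + 1) / (k + 1)) := by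
  split_ifs with hk
  · have hk : (1 : ℝ) ≤ k := by exact_mod_cast hk
    rw [mul_div_assoc', div_le_div_iff₀ (by positivity) (by positivity)]
    nlinarith [(n.cast_nonneg : (0 : ℝ) ≤ n)]
  · positivity

theorem sum_binomial_mul_div_le_two_div {p : ℝ} (hp : 0 < p) (hp1 : p ≤ 1) (n : ℕ) :
    ∑ k ∈ range (n + 1), p ^ k * (1 - p) ^ (n - k) * n.choose k *
      (if 0 < k then (n : ℝ) / k else 0) ≤ 2 / p := by
  have hq : 0 ≤ 1 - p := sub_nonneg.2 hp1
  calc _ ≤ ∑ k ∈ range (n + 1), p ^ k * (1 - p) ^ (n - k) * n.choose k *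
        (2 * ((n + 1) / (k + 1))) :=
        sum_le_sum fun k _ => mul_le_mul_of_nonneg_left (div_le_two_mul_succ_div_succ n k)
          (by positivity)
    _ = 2 / p * (p * ∑ k ∈ range (n + 1), p ^ k * (1 - p) ^ (n - k) * n.choose k *
        ((n + 1) / (k + 1))) := by
        rw [mul_sum, mul_sum]
        refine sum_congr rfl fun k _ => ?_
        field_simp
    _ = 2 / p * (1 - (1 - p) ^ (n + 1)) := by
        rw [mul_sum_pow_mul_choose_mul_succ_div_succ, add_sub_cancel, one_pow]
    _ ≤ 2 / p := mul_le_of_le_one_right (by positivity) (sub_le_self _ (by positivity))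

theorem expectation_Z_le_four_div_p_general (n : ℕ)
    (p : ℝ) (hp : 0 < p) (hp1 : p ≤ 1) :
    (∫ d, ((if 0 < bcount n d then (n : ℝ) / (bcount n d : ℝ) else 0) - 1 / p)
        ∂(bernData n p)) ≤ 4 / p := by
  have := isProbabilityMeasure_bernData n hp.le hp1
  rw [integral_sub .of_finite (integrable_const _), integral_const, probReal_univ, one_smul,
    integral_bernData_comp_bcount hp.le hp1 fun k => if 0 < k then (n : ℝ) / k else 0]
  have h := sum_binomial_mul_div_le_two_div hp hp1 n
  have : 1 / p ≤ 4 / p := by gcongr; norm_num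
  linarith [show 2 / p = 1 / p + 1 / p by ring]

/-- Lemma 1, first part: with `S_n = Σ X_i`, `p̂ = S_n/n` and
`Z = 1{S_n>0}/p̂ − 1/p` (so `1{S_n>0}/p̂ = n/S_n`, interpreted as `0` when `S_n = 0`),
one has `E[Z] ≤ 4/p` for every `n ≥ 1` and `p ∈ (0,1]`. -/
theorem expectation_Z_le_four_div_p (n : ℕ) (hn : 1 ≤ n)
    (p : ℝ) (hp : 0 < p) (hp1 : p ≤ 1) :
    (∫ d, ((if 0 < bcount n d then (n : ℝ) / (bcount n d : ℝ) else 0) - 1 / p)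
        ∂(bernData n p)) ≤ 4 / p :=
  expectation_Z_le_four_div_p_general n p hp hp1

end BernoulliInvMoment
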